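/- For every integer d₃ ≥ 5 with d₃ ≠ 7, there exists a tame polynomial automorphism F of ℂ³ with mdeg F = (3, 5, d₃). -/
import Mathlib


open MvPolynomial

/-- A polynomial automorphism of `ℂⁿ`, viewed as a `ℂ`-algebra automorphism of
`ℂ[x₁,…,xₙ]`, is *linear* if it sends each variable to a homogeneous polynomial
of degree `1` (i.e. it is induced by an invertible linear map). -/
def IsLinearAut {n : ℕ} (F : MvPolynomial (Fin n) ℂ ≃ₐ[ℂ] MvPolynomial (Fin n) ℂ) : Prop :=
  ∀ i : Fin n, (F (X i)).IsHomogeneous 1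

/-- A polynomial automorphism of `ℂⁿ` is *triangular* if it sends `x₁ ↦ x₁` and
`xᵢ ↦ xᵢ + fᵢ(x₁,…,x_{i-1})` for `i ≥ 2`, where each `fᵢ` only involves the
preceding variables. -/
def IsTriangularAut {n : ℕ} (F : MvPolynomial (Fin n) ℂ ≃ₐ[ℂ] MvPolynomial (Fin n) ℂ) : Prop :=
  (∀ i : Fin n, (i : ℕ) = 0 → F (X i) = X i) ∧
  ∀ i : Fin n, ∃ f : MvPolynomial (Fin n) ℂ,
    (∀ j ∈ f.vars, j < i) ∧ F (X i) = X i + f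

/-- A polynomial automorphism of `ℂⁿ` is *tame* if it lies in the subgroup of all
polynomial automorphisms generated by the linear and the triangular automorphisms. -/
def IsTame {n : ℕ} (F : MvPolynomial (Fin n) ℂ ≃ₐ[ℂ] MvPolynomial (Fin n) ℂ) : Prop :=
  F ∈ Subgroup.closure {G : MvPolynomial (Fin n) ℂ ≃ₐ[ℂ] MvPolynomial (Fin n) ℂ |
    IsLinearAut G ∨ IsTriangularAut G}

/-- The multidegree of a polynomial automorphism of `ℂⁿ`: the tuple of total degrees
of the images of the variables. -/
noncomputable def mdeg {n : ℕ} (F : MvPolynomial (Fin n) ℂ ≃ₐ[ℂ] MvPolynomial (Fin n) ℂ) :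
    Fin n → ℕ :=
  fun i => (F (X i)).totalDegree

/-! ### Auxiliary elementary automorphisms -/

/-- The triangular automorphism `x ↦ x, y ↦ y + x³, z ↦ z`. -/
noncomputable def eY : MvPolynomial (Fin 3) ℂ ≃ₐ[ℂ] MvPolynomial (Fin 3) ℂ :=
  AlgEquiv.ofAlgHom (aeval ![X 0, X 1 + X 0 ^ 3, X 2]) (aeval ![X 0, X 1 - X 0 ^ 3, X 2])
    (by ext i; fin_cases i <;> simp) (by ext i; fin_cases i <;> simp)

/-- The triangular automorphism `x ↦ x, y ↦ y, z ↦ z + x^b y^a`. -/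
noncomputable def eZ (b a : ℕ) : MvPolynomial (Fin 3) ℂ ≃ₐ[ℂ] MvPolynomial (Fin 3) ℂ :=
  AlgEquiv.ofAlgHom (aeval ![X 0, X 1, X 2 + X 0 ^ b * X 1 ^ a])
    (aeval ![X 0, X 1, X 2 - X 0 ^ b * X 1 ^ a])
    (by ext i; fin_cases i <;> simp) (by ext i; fin_cases i <;> simp)

/-- The linear automorphism swapping `x` and `z`. -/
noncomputable def sw : MvPolynomial (Fin 3) ℂ ≃ₐ[ℂ] MvPolynomial (Fin 3) ℂ :=
  renameEquiv ℂ (Equiv.swap 0 2)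

/-- The linear automorphism `x ↦ y ↦ z ↦ x`. -/
noncomputable def cyc : MvPolynomial (Fin 3) ℂ ≃ₐ[ℂ] MvPolynomial (Fin 3) ℂ :=
  renameEquiv ℂ (finRotate 3)

lemma sw_X0 : sw (X 0) = X 2 := by rw [sw, renameEquiv_apply, rename_X]; congr 1 <;> decide
lemma sw_X1 : sw (X 1) = X 1 := by rw [sw, renameEquiv_apply, rename_X]; congr 1 <;> decide
lemma sw_X2 : sw (X 2) = X 0 := by rw [sw, renameEquiv_apply, rename_X]; congr 1 <;> decide
lemma cyc_X0 : cyc (X 0) = X 1 := by rw [cyc, renameEquiv_apply, rename_X]; congr 1 <;> decide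
lemma cyc_X1 : cyc (X 1) = X 2 := by rw [cyc, renameEquiv_apply, rename_X]; congr 1 <;> decide
lemma cyc_X2 : cyc (X 2) = X 0 := by rw [cyc, renameEquiv_apply, rename_X]; congr 1 <;> decide

lemma eY_X0 : eY (X 0) = X 0 := by
  show aeval ![X 0, X 1 + X 0 ^ 3, X 2] (X 0) = _; simp
lemma eY_X1 : eY (X 1) = X 1 + X 0 ^ 3 := by
  show aeval ![X 0, X 1 + X 0 ^ 3, X 2] (X 1) = _; simp
lemma eY_X2 : eY (X 2) = X 2 := by
  show aeval ![X 0, X 1 + X 0 ^ 3, X 2] (X 2) = _; simp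
lemma eZ_X0 (b a : ℕ) : eZ b a (X 0) = X 0 := by
  show aeval ![X 0, X 1, X 2 + X 0 ^ b * X 1 ^ a] (X 0) = _; simp
lemma eZ_X1 (b a : ℕ) : eZ b a (X 1) = X 1 := by
  show aeval ![X 0, X 1, X 2 + X 0 ^ b * X 1 ^ a] (X 1) = _; simp
lemma eZ_X2 (b a : ℕ) : eZ b a (X 2) = X 2 + X 0 ^ b * X 1 ^ a := by
  show aeval ![X 0, X 1, X 2 + X 0 ^ b * X 1 ^ a] (X 2) = _; simp

lemma sw_linear : IsLinearAut sw := by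
  intro i
  rw [sw, renameEquiv_apply, rename_X]
  exact isHomogeneous_X _ _

lemma cyc_linear : IsLinearAut cyc := by
  intro i
  rw [cyc, renameEquiv_apply, rename_X]
  exact isHomogeneous_X _ _

lemma eY_triangular : IsTriangularAut eY := by
  constructor
  · intro i hi
    fin_cases i
    · exact eY_X0
    · exact absurd hi (by decide)
    · exact absurd hi (by decide)
  · intro i
    fin_cases i
    · exact ⟨0, by simp, show eY (X 0) = X 0 + 0 by rw [eY_X0, add_zero]⟩
    · refine ⟨X 0 ^ 3, fun j hj => ?_, eY_X1⟩
      have h2 := vars_pow (X (0 : Fin 3)) 3 hj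
      rw [vars_X] at h2
      rw [Finset.mem_singleton] at h2
      subst h2
      decide
    · exact ⟨0, by simp, show eY (X 2) = X 2 + 0 by rw [eY_X2, add_zero]⟩

lemma eZ_triangular (b a : ℕ) : IsTriangularAut (eZ b a) := by
  constructor
  · intro i hi
    fin_cases i
    · exact eZ_X0 b a
    · exact absurd hi (by decide)
    · exact absurd hi (by decide)
  · intro i
    fin_cases i
    · exact ⟨0, by simp, show eZ b a (X 0) = X 0 + 0 by rw [eZ_X0, add_zero]⟩
    · exact ⟨0, by simp, show eZ b a (X 1) = X 1 + 0 by rw [eZ_X1, add_zero]⟩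
    · refine ⟨X 0 ^ b * X 1 ^ a, fun j hj => ?_, eZ_X2 b a⟩
      have h2 := vars_mul (X (0 : Fin 3) ^ b) (X (1 : Fin 3) ^ a) hj
      rw [Finset.mem_union] at h2
      rcases h2 with h2 | h2
      · have h3 := vars_pow (X (0 : Fin 3)) b h2
        rw [vars_X, Finset.mem_singleton] at h3
        subst h3; decide
      · have h3 := vars_pow (X (1 : Fin 3)) a h2
        rw [vars_X, Finset.mem_singleton] at h3
        subst h3; decide

/-- The natural degree of the image of a polynomial under substituting `X` for
every variable bounds the total degree from below. -/
lemma natDegree_aeval_le (p : MvPolynomial (Fin 3) ℂ) :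
    ((aeval fun _ : Fin 3 => (Polynomial.X : Polynomial ℂ)) p).natDegree ≤ p.totalDegree := by
  conv_lhs => rw [p.as_sum]
  rw [map_sum]
  refine Polynomial.natDegree_sum_le_of_forall_le _ _ fun s hs => ?_
  rw [aeval_monomial]
  have hprod : (s.prod fun _ e => (Polynomial.X : Polynomial ℂ) ^ e)
      = Polynomial.X ^ (s.sum fun _ e => e) := by
    rw [Finsupp.prod, Finsupp.sum, Finset.prod_pow_eq_pow_sum]
  rw [hprod, Polynomial.algebraMap_eq]
  refine le_trans (Polynomial.natDegree_C_mul_le _ _) ?_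
  rw [Polynomial.natDegree_X_pow]
  exact le_totalDegree hs

theorem no_name (d₃ : ℕ) (h : 5 ≤ d₃) (h7 : d₃ ≠ 7) :
    ∃ F : MvPolynomial (Fin 3) ℂ ≃ₐ[ℂ] MvPolynomial (Fin 3) ℂ,
      IsTame F ∧ mdeg F = ![3, 5, d₃] := by
  obtain ⟨a, b, hab⟩ : ∃ a b : ℕ, d₃ = 3 * a + 5 * b := by
    rcases hm : d₃ % 3 with _ | _ | _ | k
    · exact ⟨d₃ / 3, 0, by omega⟩
    · exact ⟨d₃ / 3 - 3, 2, by omega⟩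
    · exact ⟨d₃ / 3 - 1, 1, by omega⟩
    · exact absurd hm (by omega)
  -- the images of the variables under the automorphism
  have h0 : (eY * eZ 5 0 * sw * eZ b a * sw * cyc) (X 0) = X 1 + X 0 ^ 3 := by
    rw [AlgEquiv.mul_apply, cyc_X0, AlgEquiv.mul_apply, sw_X1, AlgEquiv.mul_apply, eZ_X1,
      AlgEquiv.mul_apply, sw_X1, AlgEquiv.mul_apply, eZ_X1, eY_X1]
  have h1 : (eY * eZ 5 0 * sw * eZ b a * sw * cyc) (X 1) = X 2 + X 0 ^ 5 := by
    rw [AlgEquiv.mul_apply, cyc_X1, AlgEquiv.mul_apply, sw_X2, AlgEquiv.mul_apply, eZ_X0,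
      AlgEquiv.mul_apply, sw_X0, AlgEquiv.mul_apply, eZ_X2, pow_zero, mul_one, map_add,
      map_pow, eY_X2, eY_X0]
  have h2 : (eY * eZ 5 0 * sw * eZ b a * sw * cyc) (X 2)
      = X 0 + (X 2 + X 0 ^ 5) ^ b * (X 1 + X 0 ^ 3) ^ a := by
    rw [AlgEquiv.mul_apply, cyc_X2, AlgEquiv.mul_apply, sw_X0, AlgEquiv.mul_apply, eZ_X2,
      AlgEquiv.mul_apply, map_add, map_mul, map_pow, map_pow, sw_X2, sw_X0, sw_X1,
      AlgEquiv.mul_apply, map_add, map_mul, map_pow, map_pow, eZ_X0, eZ_X2, eZ_X1,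
      pow_zero, mul_one, map_add, map_mul, map_pow, map_pow, map_add, map_pow,
      eY_X0, eY_X2, eY_X1]
  -- total degrees of the images
  have td3 : (X 1 + X 0 ^ 3 : MvPolynomial (Fin 3) ℂ).totalDegree = 3 := by
    rw [totalDegree_add_eq_right_of_totalDegree_lt, totalDegree_X_pow]
    rw [totalDegree_X, totalDegree_X_pow]
    norm_num
  have td5 : (X 2 + X 0 ^ 5 : MvPolynomial (Fin 3) ℂ).totalDegree = 5 := by
    rw [totalDegree_add_eq_right_of_totalDegree_lt, totalDegree_X_pow]
    rw [totalDegree_X, totalDegree_X_pow]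
    norm_num
  have tdP : (X 0 + (X 2 + X 0 ^ 5) ^ b * (X 1 + X 0 ^ 3) ^ a :
      MvPolynomial (Fin 3) ℂ).totalDegree = d₃ := by
    refine le_antisymm ?_ ?_
    · refine le_trans (totalDegree_add _ _) (max_le ?_ ?_)
      · rw [totalDegree_X]; omega
      · refine le_trans (totalDegree_mul _ _) ?_
        have hb := le_trans (totalDegree_pow (X 2 + X 0 ^ 5 : MvPolynomial (Fin 3) ℂ) b)
          (le_of_eq (by rw [td5]))
        have ha := le_trans (totalDegree_pow (X 1 + X 0 ^ 3 : MvPolynomial (Fin 3) ℂ) a)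
          (le_of_eq (by rw [td3]))
        omega
    · -- lower bound via the substitution `Xᵢ ↦ X`
      set φ : MvPolynomial (Fin 3) ℂ →ₐ[ℂ] Polynomial ℂ := aeval fun _ => Polynomial.X with hφdef
      have n5 : (Polynomial.X + Polynomial.X ^ 5 : Polynomial ℂ).natDegree = 5 := by
        rw [Polynomial.natDegree_add_eq_right_of_natDegree_lt, Polynomial.natDegree_X_pow]
        rw [Polynomial.natDegree_X, Polynomial.natDegree_X_pow]
        norm_num
      have n3 : (Polynomial.X + Polynomial.X ^ 3 : Polynomial ℂ).natDegree = 3 := by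
        rw [Polynomial.natDegree_add_eq_right_of_natDegree_lt, Polynomial.natDegree_X_pow]
        rw [Polynomial.natDegree_X, Polynomial.natDegree_X_pow]
        norm_num
      have h5ne : (Polynomial.X + Polynomial.X ^ 5 : Polynomial ℂ) ≠ 0 := by
        intro hc; rw [hc] at n5; simp at n5
      have h3ne : (Polynomial.X + Polynomial.X ^ 3 : Polynomial ℂ) ≠ 0 := by
        intro hc; rw [hc] at n3; simp at n3
      have hφ : φ (X 0 + (X 2 + X 0 ^ 5) ^ b * (X 1 + X 0 ^ 3) ^ a : MvPolynomial (Fin 3) ℂ)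
          = Polynomial.X + (Polynomial.X + Polynomial.X ^ 5) ^ b
            * (Polynomial.X + Polynomial.X ^ 3) ^ a := by
        simp only [φ, map_add, map_mul, map_pow, aeval_X]
      have hnd : (φ (X 0 + (X 2 + X 0 ^ 5) ^ b * (X 1 + X 0 ^ 3) ^ a :
          MvPolynomial (Fin 3) ℂ)).natDegree = d₃ := by
        rw [hφ]
        have hprod : ((Polynomial.X + Polynomial.X ^ 5) ^ b
            * (Polynomial.X + Polynomial.X ^ 3) ^ a : Polynomial ℂ).natDegree = 5 * b + 3 * a := by
          rw [Polynomial.natDegree_mul (pow_ne_zero _ h5ne) (pow_ne_zero _ h3ne),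
            Polynomial.natDegree_pow, Polynomial.natDegree_pow, n5, n3]
          ring
        rw [Polynomial.natDegree_add_eq_right_of_natDegree_lt, hprod]
        · omega
        · rw [hprod, Polynomial.natDegree_X]; omega
      calc d₃ = (φ (X 0 + (X 2 + X 0 ^ 5) ^ b * (X 1 + X 0 ^ 3) ^ a :
            MvPolynomial (Fin 3) ℂ)).natDegree := hnd.symm
        _ ≤ _ := natDegree_aeval_le _
  refine ⟨eY * eZ 5 0 * sw * eZ b a * sw * cyc, ?_, ?_⟩
  · refine Subgroup.mul_mem _ (Subgroup.mul_mem _ (Subgroup.mul_mem _ (Subgroup.mul_mem _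
      (Subgroup.mul_mem _ ?_ ?_) ?_) ?_) ?_) ?_
    · exact Subgroup.subset_closure (Or.inr eY_triangular)
    · exact Subgroup.subset_closure (Or.inr (eZ_triangular 5 0))
    · exact Subgroup.subset_closure (Or.inl sw_linear)
    · exact Subgroup.subset_closure (Or.inr (eZ_triangular b a))
    · exact Subgroup.subset_closure (Or.inl sw_linear)
    · exact Subgroup.subset_closure (Or.inl cyc_linear)
  · funext i
    fin_cases i
    · exact show ((eY * eZ 5 0 * sw * eZ b a * sw * cyc) (X 0)).totalDegree = 3 by
        rw [h0, td3]
    · exact show ((eY * eZ 5 0 * sw * eZ b a * sw * cyc) (X 1)).totalDegree = 5 by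
        rw [h1, td5]
    · exact show ((eY * eZ 5 0 * sw * eZ b a * sw * cyc) (X 2)).totalDegree = d₃ by
        rw [h2, tdP]
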